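/- arXiv:2005.08296 — 4 statements merged into one kernel-verified Lean document; each statement's English description precedes it below -/
import Mathlib

section
/- Let |ψ_k⟩ = cos(θ/2)|0⟩ + e^{iφ_k} sin(θ/2)|1⟩ for k=1,2,3 with φ_1=0, the phases φ_1, φ_2, φ_3 pairwise distinct, and 0 < θ < π. If a 2×2 matrix K satisfies that K ρ K†/tr(KρK†) is a convex combination of the projectors |ψ_k⟩⟨ψ_k| for every state ρ that is a convex combination of these projectors (with KρK† ≠ 0), then Δ := K̄_{11}K_{12} tan²(θ/2) − K̄_{21}K_{22} = 0, and consequently |K_{11}|² − |K_{22}|² + |K_{12}|² (K̄_{21}K_{22})/(K̄_{11}K_{12}) − |K_{21}|² (K̄_{11}K_{12})/(K̄_{21}K_{22}) = 0 whenever the quotients are defined. -/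
/-!
Every free state has diagonal `(cos²(θ/2), sin²(θ/2))`, so `K` maps each pure state `|ψ_k⟩⟨ψ_k|`
either to `0` or to a rank-one matrix whose diagonal is in the same ratio. With `t = tan(θ/2)` and
`z = e^{iφ_k}` this balance condition reads `B + 2t Re(z Δ) = 0`, where `B` is real and does not
depend on `z`. A real-affine function of `z` vanishing at three distinct points of the unit circle
has zero linear part, so `Δ = 0`; then `B = 0`, which becomes the second identity after dividing
by `K̄₁₁K₁₂` and `K̄₂₁K₂₂`.
-/

open Complex Matrix

def proj2 (v : Fin 2 → ℂ) : Matrix (Fin 2) (Fin 2) ℂ :=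
  Matrix.of fun i j => v i * star (v j)

/-- The state `cos(θ/2)|0⟩ + e^{iφ} sin(θ/2)|1⟩`. -/
noncomputable def ψvec (θ φ : ℝ) : Fin 2 → ℂ :=
  ![(Real.cos (θ/2) : ℂ), Complex.exp (φ * Complex.I) * (Real.sin (θ/2) : ℂ)]

open ComplexConjugate

namespace Complex

theorem conj_eq_mul_mul_of_re_mul_eq {z₁ z₂ w : ℂ} (h₁ : ‖z₁‖ = 1) (h₂ : ‖z₂‖ = 1)
    (h₁₂ : z₁ ≠ z₂) (h : (z₁ * w).re = (z₂ * w).re) : conj w = z₁ * z₂ * w := by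
  have n₁ : z₁ * conj z₁ = 1 := by rw [mul_conj', h₁]; norm_num
  have n₂ : z₂ * conj z₂ = 1 := by rw [mul_conj', h₂]; norm_num
  have hc : z₁ * w + conj z₁ * conj w = z₂ * w + conj z₂ * conj w := by
    have := congrArg (fun x : ℝ => (2 * x : ℂ)) h
    simp only [re_eq_add_conj, map_mul] at this
    linear_combination this
  refine mul_left_cancel₀ (sub_ne_zero.mpr h₁₂) ?_
  linear_combination (-(z₁ * z₂)) * hc + conj w * z₂ * n₁ - conj w * z₁ * n₂

/-- A line meets the unit circle in at most two points. -/
theorem eq_zero_of_re_mul_eq {z₁ z₂ z₃ w : ℂ} (h₁ : ‖z₁‖ = 1) (h₂ : ‖z₂‖ = 1) (h₃ : ‖z₃‖ = 1)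
    (h₁₂ : z₁ ≠ z₂) (h₁₃ : z₁ ≠ z₃) (h₂₃ : z₂ ≠ z₃)
    (e₂ : (z₁ * w).re = (z₂ * w).re) (e₃ : (z₁ * w).re = (z₃ * w).re) : w = 0 := by
  have hz₁ : z₁ ≠ 0 := by rintro rfl; simp at h₁
  have key : z₁ * (z₂ - z₃) * w = 0 := by
    linear_combination conj_eq_mul_mul_of_re_mul_eq h₁ h₃ h₁₃ e₃
      - conj_eq_mul_mul_of_re_mul_eq h₁ h₂ h₁₂ e₂
  simpa [hz₁, sub_ne_zero.mpr h₂₃] using key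

end Complex

theorem mul_proj2_mul_conjTranspose (K : Matrix (Fin 2) (Fin 2) ℂ) (v : Fin 2 → ℂ) :
    K * proj2 v * Kᴴ = proj2 (K *ᵥ v) := by
  change K * vecMulVec v (star v) * Kᴴ = vecMulVec (K *ᵥ v) (star (K *ᵥ v))
  rw [mul_vecMulVec, vecMulVec_mul, star_mulVec]

theorem proj2_apply_self (v : Fin 2 → ℂ) (i : Fin 2) : proj2 v i i = (normSq (v i) : ℂ) :=
  mul_conj (v i)

theorem trace_proj2 (v : Fin 2 → ℂ) :
    (proj2 v).trace = ((normSq (v 0) + normSq (v 1) : ℝ) : ℂ) := by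
  rw [trace_fin_two, proj2_apply_self, proj2_apply_self, ofReal_add]

theorem proj2_ψvec_zero_zero (θ φ : ℝ) : proj2 (ψvec θ φ) 0 0 = (Real.cos (θ/2) : ℂ) ^ 2 := by
  rw [proj2_apply_self, ψvec, cons_val_zero, normSq_ofReal, ofReal_mul, pow_two]

theorem proj2_ψvec_one_one (θ φ : ℝ) : proj2 (ψvec θ φ) 1 1 = (Real.sin (θ/2) : ℂ) ^ 2 := by
  rw [proj2_apply_self, ψvec, cons_val_one, cons_val_zero, normSq_mul, normSq_eq_norm_sq,
    norm_exp_ofReal_mul_I, normSq_ofReal, one_pow, one_mul, ofReal_mul, pow_two]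

theorem normSq_mulVec_balance (K : Matrix (Fin 2) (Fin 2) ℂ) (c t : ℝ) {z : ℂ} (hz : ‖z‖ = 1) :
    (t * c) ^ 2 * normSq ((K *ᵥ ![(c : ℂ), z * (t * c : ℝ)]) 0)
        - c ^ 2 * normSq ((K *ᵥ ![(c : ℂ), z * (t * c : ℝ)]) 1)
      = c ^ 4 * (t ^ 2 * ‖K 0 0‖ ^ 2 + t ^ 4 * ‖K 0 1‖ ^ 2 - ‖K 1 0‖ ^ 2 - t ^ 2 * ‖K 1 1‖ ^ 2
        + 2 * t * (z * (star (K 0 0) * K 0 1 * (t : ℂ) ^ 2 - star (K 1 0) * K 1 1)).re) := by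
  have hz' : z.re * z.re + z.im * z.im = 1 := by
    rw [← normSq_apply, normSq_eq_norm_sq, hz, one_pow]
  simp only [Complex.sq_norm]
  simp only [mulVec, dotProduct, Fin.sum_univ_two, cons_val_zero, cons_val_one,
    normSq_apply, pow_two, star_def, mul_re, mul_im, sub_re, sub_im, add_re, add_im, conj_re,
    conj_im, ofReal_re, ofReal_im]
  linear_combination c ^ 4 * t ^ 2 *
    (t ^ 2 * ((K 0 1).re ^ 2 + (K 0 1).im ^ 2) - ((K 1 1).re ^ 2 + (K 1 1).im ^ 2)) * hz'

noncomputable def freeState (θ φ₂ φ₃ q₁ q₂ : ℝ) : Matrix (Fin 2) (Fin 2) ℂ :=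
  q₁ • proj2 (ψvec θ 0) + q₂ • proj2 (ψvec θ φ₂) + (1 - q₁ - q₂) • proj2 (ψvec θ φ₃)

section freeState

variable (θ φ₂ φ₃ q₁ q₂ : ℝ)

theorem freeState_zero_zero : freeState θ φ₂ φ₃ q₁ q₂ 0 0 = (Real.cos (θ/2) : ℂ) ^ 2 := by
  simp only [freeState, Matrix.add_apply, Matrix.smul_apply, proj2_ψvec_zero_zero, real_smul]
  push_cast
  ring

theorem freeState_one_one : freeState θ φ₂ φ₃ q₁ q₂ 1 1 = (Real.sin (θ/2) : ℂ) ^ 2 := by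
  simp only [freeState, Matrix.add_apply, Matrix.smul_apply, proj2_ψvec_one_one, real_smul]
  push_cast
  ring

end freeState

def PreservesFree (θ φ₂ φ₃ : ℝ) (K : Matrix (Fin 2) (Fin 2) ℂ) : Prop :=
  ∀ p₁ p₂ : ℝ, 0 ≤ p₁ → 0 ≤ p₂ → p₁ + p₂ ≤ 1 →
    (K * freeState θ φ₂ φ₃ p₁ p₂ * Kᴴ).trace ≠ 0 →
      ∃ q₁ q₂ : ℝ, 0 ≤ q₁ ∧ 0 ≤ q₂ ∧ q₁ + q₂ ≤ 1 ∧
        K * freeState θ φ₂ φ₃ p₁ p₂ * Kᴴ =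
          (K * freeState θ φ₂ φ₃ p₁ p₂ * Kᴴ).trace • freeState θ φ₂ φ₃ q₁ q₂

namespace PreservesFree

variable {θ φ₂ φ₃ p₁ p₂ : ℝ} {K : Matrix (Fin 2) (Fin 2) ℂ}

theorem sin_sq_mul_normSq_eq {v : Fin 2 → ℂ} (hK : PreservesFree θ φ₂ φ₃ K) (hp₁ : 0 ≤ p₁)
    (hp₂ : 0 ≤ p₂) (hp : p₁ + p₂ ≤ 1) (hv : freeState θ φ₂ φ₃ p₁ p₂ = proj2 v) :
    Real.sin (θ/2) ^ 2 * normSq ((K *ᵥ v) 0) = Real.cos (θ/2) ^ 2 * normSq ((K *ᵥ v) 1) := by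
  have h := hK p₁ p₂ hp₁ hp₂ hp
  rw [hv, mul_proj2_mul_conjTranspose] at h
  set u := K *ᵥ v
  by_cases htr : (proj2 u).trace = 0
  · rw [trace_proj2, ofReal_eq_zero] at htr
    have h₀ : normSq (u 0) = 0 := by linarith [normSq_nonneg (u 0), normSq_nonneg (u 1)]
    have h₁ : normSq (u 1) = 0 := by linarith [normSq_nonneg (u 0), normSq_nonneg (u 1)]
    rw [h₀, h₁, mul_zero, mul_zero]
  · obtain ⟨q₁, q₂, -, -, -, hq⟩ := h htr
    have e₀ := congrFun (congrFun hq 0) 0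
    have e₁ := congrFun (congrFun hq 1) 1
    rw [Matrix.smul_apply, proj2_apply_self, freeState_zero_zero, smul_eq_mul] at e₀
    rw [Matrix.smul_apply, proj2_apply_self, freeState_one_one, smul_eq_mul] at e₁
    apply ofReal_injective
    simp only [ofReal_mul, ofReal_pow]
    linear_combination (Real.sin (θ/2) : ℂ) ^ 2 * e₀ - (Real.cos (θ/2) : ℂ) ^ 2 * e₁

theorem balance_of_vertex {φ t : ℝ} (hK : PreservesFree θ φ₂ φ₃ K)
    (hc : Real.cos (θ/2) ≠ 0) (ht : Real.sin (θ/2) = t * Real.cos (θ/2))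
    (hp₁ : 0 ≤ p₁) (hp₂ : 0 ≤ p₂) (hp : p₁ + p₂ ≤ 1)
    (hv : freeState θ φ₂ φ₃ p₁ p₂ = proj2 (ψvec θ φ)) :
    t ^ 2 * ‖K 0 0‖ ^ 2 + t ^ 4 * ‖K 0 1‖ ^ 2 - ‖K 1 0‖ ^ 2 - t ^ 2 * ‖K 1 1‖ ^ 2
      + 2 * t * (exp (φ * I) * (star (K 0 0) * K 0 1 * (t : ℂ) ^ 2 - star (K 1 0) * K 1 1)).re
      = 0 := by
  have h := hK.sin_sq_mul_normSq_eq hp₁ hp₂ hp hv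
  rw [ψvec, ht, ← sub_eq_zero, normSq_mulVec_balance K _ _ (norm_exp_ofReal_mul_I φ)] at h
  exact (mul_eq_zero.mp h).resolve_left (pow_ne_zero 4 hc)

end PreservesFree

theorem sq_norm_identity_of_balance {K : Matrix (Fin 2) (Fin 2) ℂ} {t : ℝ} (ht : t ≠ 0)
    (hΔ : star (K 0 0) * K 0 1 * (t : ℂ) ^ 2 - star (K 1 0) * K 1 1 = 0)
    (hB : t ^ 2 * ‖K 0 0‖ ^ 2 + t ^ 4 * ‖K 0 1‖ ^ 2 - ‖K 1 0‖ ^ 2 - t ^ 2 * ‖K 1 1‖ ^ 2 = 0)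
    (ha : star (K 0 0) * K 0 1 ≠ 0) :
    ((‖K 0 0‖ : ℂ)) ^ 2 - ((‖K 1 1‖ : ℂ)) ^ 2
      + ((‖K 0 1‖ : ℂ)) ^ 2 * (star (K 1 0) * K 1 1) / (star (K 0 0) * K 0 1)
      - ((‖K 1 0‖ : ℂ)) ^ 2 * (star (K 0 0) * K 0 1) / (star (K 1 0) * K 1 1) = 0 := by
  have hd : star (K 1 0) * K 1 1 = star (K 0 0) * K 0 1 * (t : ℂ) ^ 2 := by
    linear_combination -hΔ
  have hB' : (t : ℂ) ^ 2 * (‖K 0 0‖ : ℂ) ^ 2 + (t : ℂ) ^ 4 * (‖K 0 1‖ : ℂ) ^ 2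
      - (‖K 1 0‖ : ℂ) ^ 2 - (t : ℂ) ^ 2 * (‖K 1 1‖ : ℂ) ^ 2 = 0 := by
    exact_mod_cast hB
  have ht' : (t : ℂ) ≠ 0 := ofReal_ne_zero.mpr ht
  rw [hd]
  generalize star (K 0 0) * K 0 1 = a at ha ⊢
  field_simp
  linear_combination hB'

theorem stmt3 (θ φ₂ φ₃ : ℝ) (hθ : 0 < θ ∧ θ < Real.pi)
    (hφdist : Complex.exp (φ₂ * Complex.I) ≠ 1 ∧ Complex.exp (φ₃ * Complex.I) ≠ 1 ∧
      Complex.exp (φ₂ * Complex.I) ≠ Complex.exp (φ₃ * Complex.I))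
    (K : Matrix (Fin 2) (Fin 2) ℂ)
    (hfree : ∀ p₁ p₂ : ℝ, 0 ≤ p₁ → 0 ≤ p₂ → p₁ + p₂ ≤ 1 →
      let ρ : Matrix (Fin 2) (Fin 2) ℂ :=
        p₁ • proj2 (ψvec θ 0) + p₂ • proj2 (ψvec θ φ₂) + (1 - p₁ - p₂) • proj2 (ψvec θ φ₃)
      (K * ρ * Kᴴ).trace ≠ 0 →
        ∃ q₁ q₂ : ℝ, 0 ≤ q₁ ∧ 0 ≤ q₂ ∧ q₁ + q₂ ≤ 1 ∧
          K * ρ * Kᴴ = (K * ρ * Kᴴ).trace •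
            (q₁ • proj2 (ψvec θ 0) + q₂ • proj2 (ψvec θ φ₂)
              + (1 - q₁ - q₂) • proj2 (ψvec θ φ₃))) :
    star (K 0 0) * K 0 1 * ((Real.tan (θ/2) : ℂ))^2 - star (K 1 0) * K 1 1 = 0 ∧
      (star (K 0 0) * K 0 1 ≠ 0 → star (K 1 0) * K 1 1 ≠ 0 →
        ((‖K 0 0‖ : ℂ))^2 - ((‖K 1 1‖ : ℂ))^2
          + ((‖K 0 1‖ : ℂ))^2 * (star (K 1 0) * K 1 1) / (star (K 0 0) * K 0 1)
          - ((‖K 1 0‖ : ℂ))^2 * (star (K 0 0) * K 0 1) / (star (K 1 0) * K 1 1) = 0) := by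
  obtain ⟨hθ₀, hθπ⟩ := hθ
  obtain ⟨h₂, h₃, h₂₃⟩ := hφdist
  have hK : PreservesFree θ φ₂ φ₃ K := hfree
  have hc : Real.cos (θ/2) ≠ 0 := (Real.cos_pos_of_mem_Ioo ⟨by linarith, by linarith⟩).ne'
  have ht : Real.tan (θ/2) ≠ 0 :=
    (Real.tan_pos_of_pos_of_lt_pi_div_two (by linarith) (by linarith)).ne'
  have hsin : Real.sin (θ/2) = Real.tan (θ/2) * Real.cos (θ/2) := by
    rw [Real.tan_eq_sin_div_cos, div_mul_cancel₀ _ hc]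
  have e₁ := hK.balance_of_vertex (p₁ := 1) (p₂ := 0) (φ := 0) hc hsin zero_le_one le_rfl
    (by norm_num) (by simp [freeState])
  have e₂ := hK.balance_of_vertex (p₁ := 0) (p₂ := 1) (φ := φ₂) hc hsin le_rfl zero_le_one
    (by norm_num) (by simp [freeState])
  have e₃ := hK.balance_of_vertex (p₁ := 0) (p₂ := 0) (φ := φ₃) hc hsin le_rfl le_rfl
    (by norm_num) (by simp [freeState])
  have h2t : 2 * Real.tan (θ/2) ≠ 0 := mul_ne_zero two_ne_zero ht
  have hΔ := Complex.eq_zero_of_re_mul_eq (norm_exp_ofReal_mul_I 0)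
    (norm_exp_ofReal_mul_I φ₂) (norm_exp_ofReal_mul_I φ₃) (by simpa using h₂.symm)
    (by simpa using h₃.symm) h₂₃ (mul_left_cancel₀ h2t (by linear_combination e₁ - e₂))
    (mul_left_cancel₀ h2t (by linear_combination e₁ - e₃))
  have hB := e₁
  simp only [ofReal_zero, zero_mul, exp_zero, hΔ, zero_re, mul_zero, add_zero] at hB
  exact ⟨hΔ, fun ha _ => sq_norm_identity_of_balance ht hΔ hB ha⟩
end

section
/- For any finite set of unit vectors {|ψ_i⟩}_{i=1}^n spanning ℂ^d, there exists a finite extension {|ψ_i⟩}_{i=1}^m (m ≥ n) by unit vectors and strictly positive weights p̃_1,…,p̃_m summing to 1 such that ∑_{i=1}^m p̃_i |ψ_i⟩⟨ψ_i| = (1/d) I_d. -/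
open Complex Real

def proj {d : ℕ} (v : Fin d → ℂ) : Matrix (Fin d) (Fin d) ℂ :=
  Matrix.of fun i j => v i * star (v j)

def IsUnitVec {d : ℕ} (v : Fin d → ℂ) : Prop := ∑ j, Complex.normSq (v j) = 1

noncomputable def Wop {d : ℕ} (a b : Fin d) (v : Fin d → ℂ) : Fin d → ℂ :=
  fun j => Complex.exp ((2 * Real.pi * ((b : ℝ) * (j : ℝ) / (d : ℝ)) : ℝ) * Complex.I) * v (j + a)

lemma Wop_zero_zero {d : ℕ} [NeZero d] (v : Fin d → ℂ) : Wop 0 0 v = v := by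
  funext j
  simp [Wop]

lemma Wop_unit {d : ℕ} [NeZero d] (a b : Fin d) (v : Fin d → ℂ) (hv : IsUnitVec v) :
    IsUnitVec (Wop a b v) := by
  unfold IsUnitVec Wop at *
  have h1 : ∀ j : Fin d, Complex.normSq
      (Complex.exp ((2 * Real.pi * ((b : ℝ) * (j : ℝ) / (d : ℝ)) : ℝ) * Complex.I) * v (j + a))
      = Complex.normSq (v (j + a)) := by
    intro j
    rw [Complex.normSq_mul]
    rw [Complex.normSq_eq_norm_sq, Complex.norm_exp_ofReal_mul_I]
    simp
  simp only [h1]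
  rw [← hv]
  exact Fintype.sum_equiv (Equiv.addRight a) _ _ (fun j => rfl)

lemma sum_exp_root (d : ℕ) (hd : 0 < d) (k : ℤ) :
    ∑ b : Fin d, Complex.exp ((2 * Real.pi * (b * k / d) : ℝ) * Complex.I)
      = if (d : ℤ) ∣ k then (d : ℂ) else 0 := by
  set x : ℂ := Complex.exp ((2 * Real.pi * (k / d) : ℝ) * Complex.I) with hx
  have hpow : ∀ b : ℕ, Complex.exp ((2 * Real.pi * (b * k / d) : ℝ) * Complex.I) = x ^ b := by
    intro b
    rw [hx, ← Complex.exp_nat_mul]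
    congr 1
    push_cast
    ring
  have hxd : x ^ d = 1 := by
    rw [hx, ← Complex.exp_nat_mul]
    have hdC : (d : ℂ) ≠ 0 := Nat.cast_ne_zero.mpr hd.ne'
    have : (d : ℂ) * ((2 * Real.pi * (↑k / ↑d) : ℝ) * Complex.I) = (k : ℂ) * (2 * Real.pi * Complex.I) := by
      push_cast
      field_simp
    rw [this]
    exact_mod_cast Complex.exp_int_mul_two_pi_mul_I k
  have hsum : ∑ b : Fin d, Complex.exp ((2 * Real.pi * (b * k / d) : ℝ) * Complex.I)
      = ∑ b ∈ Finset.range d, x ^ b := by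
    rw [← Fin.sum_univ_eq_sum_range (fun b => x ^ b) d]
    exact Finset.sum_congr rfl fun b _ => hpow b
  rw [hsum]
  by_cases hdk : (d : ℤ) ∣ k
  · obtain ⟨m, rfl⟩ := hdk
    have hx1 : x = 1 := by
      rw [hx]
      have hd' : (d : ℝ) ≠ 0 := Nat.cast_ne_zero.mpr hd.ne'
      have hdm : (((d * m : ℤ) : ℝ)) / (d : ℝ) = (m : ℝ) := by
        push_cast
        rw [mul_comm]
        exact mul_div_cancel_right₀ _ hd'
      have hre : (2 * Real.pi * (((d * m : ℤ) : ℝ) / (d : ℝ))) = 2 * Real.pi * (m : ℝ) := by rw [hdm]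
      have : ((2 * Real.pi * (↑(d * m : ℤ) / ↑d) : ℝ) : ℂ) * Complex.I = (m : ℂ) * (2 * Real.pi * Complex.I) := by
        rw [hre]
        push_cast
        ring
      rw [this]
      exact_mod_cast Complex.exp_int_mul_two_pi_mul_I m
    simp [hx1]
  · have hx1 : x ≠ 1 := by
      intro h
      rw [hx, Complex.exp_eq_one_iff] at h
      obtain ⟨m, hm⟩ := h
      apply hdk
      refine ⟨m, ?_⟩
      have him := congrArg Complex.im hm
      simp [Complex.mul_im, Complex.mul_re] at him
      have hπ : Real.pi ≠ 0 := Real.pi_ne_zero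
      have hd' : (d : ℝ) ≠ 0 := Nat.cast_ne_zero.mpr hd.ne'
      have h2 : (k : ℝ) / d = m :=
        mul_left_cancel₀ (by positivity : (0:ℝ) < 2 * Real.pi).ne' (by linarith [him])
      rw [div_eq_iff hd'] at h2
      have : (k : ℝ) = (d : ℝ) * m := by rw [h2]; ring
      exact_mod_cast this
    rw [geom_sum_eq hx1, hxd]
    simp [hdk]

lemma sum_proj {d : ℕ} [NeZero d] (v : Fin d → ℂ) (hv : IsUnitVec v) :
    ∑ a : Fin d, ∑ b : Fin d, proj (Wop a b v) = (d : ℂ) • (1 : Matrix (Fin d) (Fin d) ℂ) := by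
  have hd : 0 < d := Nat.pos_of_ne_zero (NeZero.ne d)
  ext x y
  have key : ∀ a b : Fin d, (proj (Wop a b v)) x y =
      Complex.exp ((2 * Real.pi * ((b : ℝ) * (((x : ℤ) - (y : ℤ) : ℤ) : ℝ) / (d : ℝ)) : ℝ) * Complex.I)
        * (v (x + a) * star (v (y + a))) := by
    intro a b
    simp only [proj, Wop, Matrix.of_apply]
    rw [star_mul']
    have hstar : star (Complex.exp ((2 * Real.pi * ((b : ℝ) * (y : ℝ) / (d : ℝ)) : ℝ) * Complex.I))
        = Complex.exp (((-(2 * Real.pi * ((b : ℝ) * (y : ℝ) / (d : ℝ))) : ℝ)) * Complex.I) := by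
      rw [Complex.star_def, ← Complex.exp_conj, map_mul, Complex.conj_I, Complex.conj_ofReal,
        Complex.ofReal_neg]
      congr 1
      ring
    rw [hstar]
    have hE : Complex.exp ((2 * Real.pi * ((b : ℝ) * (x : ℝ) / (d : ℝ)) : ℝ) * Complex.I)
        * Complex.exp (((-(2 * Real.pi * ((b : ℝ) * (y : ℝ) / (d : ℝ))) : ℝ)) * Complex.I)
        = Complex.exp ((2 * Real.pi * ((b : ℝ) * (((x : ℤ) - (y : ℤ) : ℤ) : ℝ) / (d : ℝ)) : ℝ) * Complex.I) := by
      rw [← Complex.exp_add, ← add_mul, ← Complex.ofReal_add]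
      congr 2
      push_cast
      ring
    rw [← hE]
    ring
  simp only [Matrix.sum_apply]
  simp only [key]
  rw [Finset.sum_comm]
  simp only [← Finset.mul_sum]
  rw [← Finset.sum_mul, sum_exp_root d hd ((x : ℤ) - (y : ℤ))]
  have hdvd : ((d : ℤ) ∣ ((x : ℤ) - (y : ℤ))) ↔ x = y := by
    constructor
    · intro h
      have h0 : ((x : ℤ) - (y : ℤ)) = 0 := by
        refine Int.eq_zero_of_dvd_of_natAbs_lt_natAbs h ?_
        have hx := x.isLt
        have hy := y.isLt
        omega
      exact Fin.ext (by omega)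
    · rintro rfl; simp
  by_cases hxy : x = y
  · subst hxy
    simp only [if_pos (hdvd.mpr rfl), Matrix.smul_apply, Matrix.one_apply_eq, smul_eq_mul, mul_one]
    have hterm : ∀ a : Fin d, v (x + a) * star (v (x + a))
        = ((Complex.normSq (v (x + a)) : ℝ) : ℂ) := by
      intro a
      rw [Complex.star_def, Complex.mul_conj]
    calc (d : ℂ) * ∑ a : Fin d, (v (x + a) * star (v (x + a)))
        = (d : ℂ) * ∑ a : Fin d, ((Complex.normSq (v (x + a)) : ℝ) : ℂ) := by
          congr 1; exact Finset.sum_congr rfl fun a _ => hterm a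
      _ = (d : ℂ) * ((∑ a : Fin d, Complex.normSq (v (x + a)) : ℝ) : ℂ) := by push_cast; ring
      _ = (d : ℂ) := by
          have h2 : ∑ a : Fin d, Complex.normSq (v (x + a)) = ∑ j : Fin d, Complex.normSq (v j) :=
            Fintype.sum_equiv (Equiv.addLeft x) _ _ (fun a => rfl)
          rw [h2, hv]
          simp
  · have hne : ¬ ((d:ℤ) ∣ ((x : ℤ) - (y : ℤ))) := fun h => hxy (hdvd.mp h)
    simp only [if_neg hne, zero_mul, Matrix.smul_apply,
      Matrix.one_apply_ne hxy, smul_eq_mul, mul_zero]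

theorem stmt5 {d n : ℕ} (hd : 0 < d)
    (ψ : Fin n → (Fin d → ℂ)) (hψ : ∀ i, IsUnitVec (ψ i))
    (hspan : Submodule.span ℂ (Set.range ψ) = ⊤) :
    ∃ (m : ℕ) (hnm : n ≤ m) (φ : Fin m → (Fin d → ℂ)) (p : Fin m → ℝ),
      (∀ i : Fin n, φ (Fin.castLE hnm i) = ψ i) ∧
      (∀ i, IsUnitVec (φ i)) ∧
      (∀ i, 0 < p i) ∧ (∑ i, p i = 1) ∧
      ∑ i, p i • proj (φ i) = (1 / d : ℂ) • (1 : Matrix (Fin d) (Fin d) ℂ) := by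
  haveI : NeZero d := ⟨hd.ne'⟩
  have hn : 0 < n := by
    rcases Nat.eq_zero_or_pos n with h | h
    · exfalso
      subst h
      haveI : Nonempty (Fin d) := ⟨⟨0, hd⟩⟩
      rw [Set.range_eq_empty ψ, Submodule.span_empty] at hspan
      exact bot_ne_top hspan
    · exact h
  set m := d * d * n with hm
  have hnm : n ≤ m := Nat.le_mul_of_pos_left n (by positivity)
  set e : (Fin d × Fin d) × Fin n ≃ Fin m :=
    (Equiv.prodCongr finProdFinEquiv (Equiv.refl (Fin n))).trans finProdFinEquiv with he
  set φ : Fin m → (Fin d → ℂ) :=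
    fun k => Wop (e.symm k).1.1 (e.symm k).1.2 (ψ (e.symm k).2) with hφ
  have hcast : ∀ i : Fin n, e ((0, 0), i) = Fin.castLE hnm i := by
    intro i
    apply Fin.ext
    simp [he, finProdFinEquiv]
  have hφψ : ∀ i : Fin n, φ (Fin.castLE hnm i) = ψ i := by
    intro i
    rw [← hcast i]
    simp only [hφ, Equiv.symm_apply_apply]
    exact Wop_zero_zero (ψ i)
  set p : Fin m → ℝ := fun _ => 1 / (m : ℝ) with hp
  have hm0 : 0 < m := by positivity
  have hmR : (0:ℝ) < m := by exact_mod_cast hm0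
  refine ⟨m, hnm, φ, p, hφψ, ?_, ?_, ?_, ?_⟩
  · intro k
    exact Wop_unit _ _ _ (hψ _)
  · intro k
    exact one_div_pos.mpr hmR
  · simp only [hp, Finset.sum_const, Finset.card_univ, Fintype.card_fin, nsmul_eq_mul]
    field_simp
  · have hsum1 : ∑ k, p k • proj (φ k) = (1 / (m : ℝ)) • ∑ k, proj (φ k) := by
      rw [Finset.smul_sum]
    have hsum2 : ∑ k, proj (φ k)
        = ∑ t : (Fin d × Fin d) × Fin n, proj (Wop t.1.1 t.1.2 (ψ t.2)) := by
      rw [← Equiv.sum_comp e (fun k => proj (φ k))]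
      refine Finset.sum_congr rfl fun t _ => ?_
      simp only [hφ, Equiv.symm_apply_apply]
    have hsum3 : ∑ t : (Fin d × Fin d) × Fin n, proj (Wop t.1.1 t.1.2 (ψ t.2))
        = ∑ i : Fin n, ∑ a : Fin d, ∑ b : Fin d, proj (Wop a b (ψ i)) := by
      rw [Fintype.sum_prod_type, Finset.sum_comm]
      refine Finset.sum_congr rfl fun i _ => ?_
      rw [Fintype.sum_prod_type]
    have hsum4 : ∑ i : Fin n, ∑ a : Fin d, ∑ b : Fin d, proj (Wop a b (ψ i))
        = ((n : ℂ) * (d : ℂ)) • (1 : Matrix (Fin d) (Fin d) ℂ) := by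
      rw [Finset.sum_congr rfl fun i _ => sum_proj (ψ i) (hψ i), Finset.sum_const,
        ← Nat.cast_smul_eq_nsmul ℂ, Finset.card_univ, Fintype.card_fin, smul_smul]
    rw [hsum1, hsum2, hsum3, hsum4]
    ext x y
    simp only [Matrix.smul_apply, Matrix.one_apply, smul_eq_mul, Complex.real_smul]
    have hdC : (d : ℂ) ≠ 0 := Nat.cast_ne_zero.mpr hd.ne'
    have hnC : (n : ℂ) ≠ 0 := Nat.cast_ne_zero.mpr hn.ne'
    by_cases hxy : x = y
    · simp only [if_pos hxy, mul_one]
      push_cast [hm]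
      field_simp
    · simp only [if_neg hxy, mul_zero]
end

section
/- Unit vectors |ψ_1⟩,…,|ψ_n⟩ in a finite-dimensional complex Hilbert space are linearly independent if and only if there exist positive semidefinite operators E_1,…,E_n, E_? with E_1+⋯+E_n+E_? = I and tr(E_i |ψ_j⟩⟨ψ_j|) = 0 for all i ≠ j while tr(E_i |ψ_i⟩⟨ψ_i|) > 0 for all i. -/
/-!
If the `ψ i` are linearly independent they have a dual family `φ i` with `⟨φ i, ψ j⟩ = δ i j`;
then `E i = c • |φ i⟩⟨φ i|` works as soon as `c > 0` is small enough that `c • ∑ i |φ i⟩⟨φ i| ≤ 1`,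
which holds for `c = (1 + ‖∑ i |φ i⟩⟨φ i|‖)⁻¹` in the C⋆-algebra of matrices. Conversely, for a
positive semidefinite `E`, `⟨ψ, E ψ⟩ = 0` forces `E ψ = 0`, so `E i` annihilates every `ψ j` with
`j ≠ i` but not `ψ i`, and applying `E i` to a vanishing linear combination kills its `i`-th
coefficient.
-/

open ComplexOrder Matrix

theorem LinearIndependent.of_separating {ι R M N : Type*} [Ring R] [IsDomain R] [AddCommGroup M]
    [Module R M] [AddCommGroup N] [Module R N] [Module.IsTorsionFree R N] {v : ι → M}
    (L : ι → M →ₗ[R] N) (hL : ∀ i j, i ≠ j → L i (v j) = 0) (hLv : ∀ i, L i (v i) ≠ 0) :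
    LinearIndependent R v := by
  classical
  refine linearIndependent_iff'.mpr fun s g hg i hi => ?_
  have hgi : g i • L i (v i) = 0 := by
    rw [← Finset.sum_eq_single_of_mem (f := fun j => g j • L i (v j)) i hi
      fun j _ hji => by rw [hL i j hji.symm, smul_zero]]
    simpa only [map_sum, map_smul, map_zero] using congrArg (L i) hg
  exact (smul_eq_zero.mp hgi).resolve_right (hLv i)

theorem LinearIndependent.exists_dotProduct_eq_ite {ι m K : Type*} [Fintype ι] [DecidableEq ι]
    [Fintype m] [DecidableEq m] [Field K] {v : ι → m → K} (hv : LinearIndependent K v) :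
    ∃ Φ : Matrix ι m K, ∀ i j, Φ i ⬝ᵥ v j = if i = j then 1 else 0 := by
  obtain ⟨g, hg⟩ := (Fintype.linearCombination K v).exists_leftInverse_of_injective
    (LinearMap.ker_eq_bot.mpr hv.fintypeLinearCombination_injective)
  refine ⟨LinearMap.toMatrix' g, fun i j => ?_⟩
  have hgv : g (v j) = Pi.single j 1 := by
    simpa using LinearMap.congr_fun hg (Pi.single j 1)
  change (LinearMap.toMatrix' g *ᵥ v j) i = _
  rw [LinearMap.toMatrix'_mulVec, hgv, Pi.single_apply]

theorem CStarAlgebra.exists_pos_smul_le_one {A : Type*} [CStarAlgebra A] [PartialOrder A]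
    [StarOrderedRing A] {a : A} (ha : 0 ≤ a) : ∃ c : ℝ, 0 < c ∧ c • a ≤ 1 := by
  refine ⟨(1 + ‖a‖)⁻¹, by positivity, ?_⟩
  rw [← norm_le_one_iff_of_nonneg _ (smul_nonneg (by positivity) ha), norm_smul,
    Real.norm_of_nonneg (by positivity), inv_mul_le_iff₀ (by positivity)]
  linarith

open scoped Matrix.Norms.L2Operator MatrixOrder in
theorem Matrix.PosSemidef.exists_pos_posSemidef_one_sub_smul {n : Type*} [Fintype n]
    [DecidableEq n] {S : Matrix n n ℂ} (hS : S.PosSemidef) :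
    ∃ c : ℝ, 0 < c ∧ (1 - c • S).PosSemidef :=
  CStarAlgebra.exists_pos_smul_le_one hS.nonneg

theorem proj_eq_vecMulVec {d : ℕ} (v : Fin d → ℂ) : proj v = vecMulVec v (star v) := rfl

theorem posSemidef_proj {d : ℕ} (v : Fin d → ℂ) : (proj v).PosSemidef :=
  posSemidef_vecMulVec_self_star v

theorem trace_mul_proj {d : ℕ} (A : Matrix (Fin d) (Fin d) ℂ) (v : Fin d → ℂ) :
    (A * proj v).trace = star v ⬝ᵥ (A *ᵥ v) := by
  rw [proj_eq_vecMulVec, mul_vecMulVec, trace_vecMulVec, dotProduct_comm]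

theorem trace_proj_mul_proj {d : ℕ} (u v : Fin d → ℂ) :
    (proj u * proj v).trace = Complex.normSq (star u ⬝ᵥ v) := by
  rw [trace_mul_proj, proj_eq_vecMulVec, vecMulVec_mulVec, dotProduct_smul, op_smul_eq_mul,
    Complex.normSq_eq_conj_mul_self, ← Complex.star_def, star_dotProduct]

theorem stmt14_general {d n : ℕ}
    (ψ : Fin n → (Fin d → ℂ)) :
    LinearIndependent ℂ ψ ↔
      ∃ (E : Fin n → Matrix (Fin d) (Fin d) ℂ) (Eq : Matrix (Fin d) (Fin d) ℂ),
        (∀ i, (E i).PosSemidef) ∧ Eq.PosSemidef ∧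
        (∑ i, E i) + Eq = (1 : Matrix (Fin d) (Fin d) ℂ) ∧
        (∀ i j, i ≠ j → (E i * proj (ψ j)).trace = 0) ∧
        (∀ i, 0 < ((E i * proj (ψ i)).trace).re) := by
  constructor
  · intro hli
    obtain ⟨Φ, hΦ⟩ := hli.exists_dotProduct_eq_ite
    obtain ⟨c, hc, hEq⟩ := (posSemidef_sum Finset.univ fun i _ =>
      posSemidef_proj (star (Φ i))).exists_pos_posSemidef_one_sub_smul
    have htrace : ∀ i j, (c • proj (star (Φ i)) * proj (ψ j)).trace =
        c • (Complex.normSq (if i = j then 1 else 0) : ℂ) := fun i j => by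
      rw [smul_mul_assoc, trace_smul, trace_proj_mul_proj, star_star, hΦ]
    refine ⟨fun i => c • proj (star (Φ i)), 1 - c • ∑ i, proj (star (Φ i)),
      fun i => (posSemidef_proj _).smul hc.le, hEq, by rw [Finset.smul_sum]; abel,
      fun i j hij => by rw [htrace]; simp [hij], fun i => by rw [htrace]; simpa using hc⟩
  · rintro ⟨E, -, hE, -, -, hzero, hpos⟩
    refine .of_separating (fun i => (E i).mulVecLin) (fun i j hij => ?_) (fun i hi => ?_)
    · have hij' := hzero i j hij
      rw [trace_mul_proj] at hij'
      exact ((hE i).dotProduct_mulVec_zero_iff _).mp hij'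
    · have hii := hpos i
      rw [trace_mul_proj, ← mulVecLin_apply, hi, dotProduct_zero] at hii
      exact hii.false

/-- Unit vectors are linearly independent iff they admit an unambiguous-discrimination POVM. -/
theorem stmt14 {d n : ℕ}
    (ψ : Fin n → (Fin d → ℂ)) (hψ : ∀ i, IsUnitVec (ψ i)) :
    LinearIndependent ℂ ψ ↔
      ∃ (E : Fin n → Matrix (Fin d) (Fin d) ℂ) (Eq : Matrix (Fin d) (Fin d) ℂ),
        (∀ i, (E i).PosSemidef) ∧ Eq.PosSemidef ∧
        (∑ i, E i) + Eq = (1 : Matrix (Fin d) (Fin d) ℂ) ∧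
        (∀ i j, i ≠ j → (E i * proj (ψ j)).trace = 0) ∧
        (∀ i, 0 < ((E i * proj (ψ i)).trace).re) :=
  stmt14_general ψ
end

section
/- Let ρ' = p_0|e_0⟩⟨e_0| + p_+|e_+⟩⟨e_+| + p_1|e_1⟩⟨e_1| be a mixture of three pairwise linearly independent (not necessarily orthogonal) unit vectors in ℂ³, with p_0,p_+,p_1 ≥ 0 summing to 1. Then the optimal probability P of unambiguously discriminating the three states satisfies P ≤ 1 − (2/3)(√(p_0 p_+)|⟨e_0|e_+⟩| + √(p_+ p_1)|⟨e_+|e_1⟩| + √(p_1 p_0)|⟨e_1|e_0⟩|). -/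
/-! Unambiguity forces `E i *ᵥ e j = 0` for `i ≠ j`, since `E i ≥ 0` and `⟨e j| E i |e j⟩ = 0`.
Resolving the identity as `∑ E i + Einc = 1` then gives `⟨e i|e j⟩ = ⟨e i| Einc |e j⟩` for `i ≠ j`,
and success probability `1 - q i` for `e i`, where `q i = ⟨e i| Einc |e i⟩`. Cauchy–Schwarz for
the form of `Einc` and AM–GM give `√(p i p j) |⟨e i|e j⟩| ≤ (p i q i + p j q j) / 2`; summing over
the three pairs bounds the overlap sum `S` by `∑ p i q i = 1 - P`, so `P ≤ 1 - S ≤ 1 - (2/3) S`. -/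

open ComplexOrder Matrix

def proj3 (v : Fin 3 → ℂ) : Matrix (Fin 3) (Fin 3) ℂ :=
  Matrix.of fun i j => v i * star (v j)

def IsUnitVec3 (v : Fin 3 → ℂ) : Prop := ∑ j, Complex.normSq (v j) = 1

namespace Matrix

variable {𝕜 n : Type*} [RCLike 𝕜] [Fintype n]

theorem PosSemidef.norm_dotProduct_mulVec_sq_le {M : Matrix n n 𝕜} (hM : M.PosSemidef)
    (x y : n → 𝕜) :
    ‖star x ⬝ᵥ M *ᵥ y‖ ^ 2 ≤ RCLike.re (star x ⬝ᵥ M *ᵥ x) * RCLike.re (star y ⬝ᵥ M *ᵥ y) := by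
  let := M.toSeminormedAddCommGroup hM
  let := M.toInnerProductSpace hM
  have hinner (u v : n → 𝕜) : inner 𝕜 u v = star u ⬝ᵥ M *ᵥ v := dotProduct_comm _ _
  have h := inner_mul_inner_self_le (𝕜 := 𝕜) x y
  rwa [norm_inner_symm y x, ← sq, hinner, hinner, hinner] at h

theorem IsHermitian.star_dotProduct_mulVec {M : Matrix n n 𝕜} (hM : M.IsHermitian)
    (x y : n → 𝕜) : star x ⬝ᵥ M *ᵥ y = star (M *ᵥ x) ⬝ᵥ y := by
  rw [star_mulVec, ← dotProduct_mulVec, hM.eq]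

theorem trace_mul_vecMulVec_star (M : Matrix n n 𝕜) (v : n → 𝕜) :
    (M * vecMulVec v (star v)).trace = star v ⬝ᵥ M *ᵥ v := by
  rw [mul_vecMulVec, trace_vecMulVec, dotProduct_comm]

end Matrix

section Discrimination

variable {𝕜 ι n : Type*} [RCLike 𝕜] [Fintype ι] [Fintype n] [DecidableEq n]
  {E : ι → Matrix n n 𝕜} {Einc : Matrix n n 𝕜} {e : ι → n → 𝕜}

theorem dotProduct_eq_sum_add_of_sum_add_eq_one (hsum : ∑ i, E i + Einc = 1) (x y : n → 𝕜) :
    star x ⬝ᵥ y = ∑ k, star x ⬝ᵥ E k *ᵥ y + star x ⬝ᵥ Einc *ᵥ y := by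
  conv_lhs => rw [← one_mulVec y, ← hsum]
  rw [add_mulVec, sum_mulVec, dotProduct_add, dotProduct_sum]

theorem dotProduct_mulVec_self_eq_sub_of_unambiguous (hsum : ∑ i, E i + Einc = 1)
    (hann : ∀ i j, i ≠ j → E i *ᵥ e j = 0) (i : ι) :
    star (e i) ⬝ᵥ E i *ᵥ e i = star (e i) ⬝ᵥ e i - star (e i) ⬝ᵥ Einc *ᵥ e i := by
  rw [dotProduct_eq_sum_add_of_sum_add_eq_one hsum (e i) (e i), Finset.sum_eq_single i
    (fun k _ hk => by rw [hann k i hk, dotProduct_zero]) (by simp)]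
  ring

theorem dotProduct_eq_dotProduct_mulVec_of_unambiguous (hsum : ∑ i, E i + Einc = 1)
    (hE : ∀ i, (E i).IsHermitian) (hann : ∀ i j, i ≠ j → E i *ᵥ e j = 0) {i j : ι}
    (hij : i ≠ j) : star (e i) ⬝ᵥ e j = star (e i) ⬝ᵥ Einc *ᵥ e j := by
  rw [dotProduct_eq_sum_add_of_sum_add_eq_one hsum, Finset.sum_eq_zero, zero_add]
  intro k _
  by_cases hkj : k = j
  · subst hkj
    rw [(hE k).star_dotProduct_mulVec, hann k i (Ne.symm hij), star_zero, zero_dotProduct]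
  · rw [hann k j hkj, dotProduct_zero]

end Discrimination

theorem Real.sqrt_mul_mul_le_of_sq_le_mul {a b qa qb c : ℝ} (ha : 0 ≤ a) (hb : 0 ≤ b)
    (hqa : 0 ≤ qa) (hqb : 0 ≤ qb) (hc : 0 ≤ c) (hcq : c ^ 2 ≤ qa * qb) :
    √(a * b) * c ≤ (a * qa + b * qb) / 2 := by
  rw [← sq_le_sq₀ (by positivity) (by positivity), mul_pow, Real.sq_sqrt (by positivity)]
  nlinarith [sq_nonneg (a * qa - b * qb), mul_le_mul_of_nonneg_left hcq (mul_nonneg ha hb)]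

theorem proj3_eq_vecMulVec (v : Fin 3 → ℂ) : proj3 v = vecMulVec v (star v) := rfl

theorem IsUnitVec3.star_dotProduct_self {v : Fin 3 → ℂ} (hv : IsUnitVec3 v) :
    star v ⬝ᵥ v = 1 := by
  rw [← Complex.ofReal_one, ← hv, Complex.ofReal_sum]
  exact Finset.sum_congr rfl fun j _ => (Complex.normSq_eq_conj_mul_self).symm

theorem stmt17_general (e : Fin 3 → (Fin 3 → ℂ)) (hunit : ∀ i, IsUnitVec3 (e i))
    (p : Fin 3 → ℝ) (hp : ∀ i, 0 ≤ p i) (hpsum : ∑ i, p i = 1)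
    (E : Fin 3 → Matrix (Fin 3) (Fin 3) ℂ) (Einc : Matrix (Fin 3) (Fin 3) ℂ)
    (hE : ∀ i, (E i).PosSemidef) (hEinc : Einc.PosSemidef)
    (hsum : (∑ i, E i) + Einc = (1 : Matrix (Fin 3) (Fin 3) ℂ))
    (hunamb : ∀ i j, i ≠ j → (E i * proj3 (e j)).trace = 0) :
    ∑ i, p i * ((E i * proj3 (e i)).trace).re
      ≤ 1 - (2/3) * (Real.sqrt (p 0 * p 1) * ‖star (e 0) ⬝ᵥ e 1‖
          + Real.sqrt (p 1 * p 2) * ‖star (e 1) ⬝ᵥ e 2‖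
          + Real.sqrt (p 2 * p 0) * ‖star (e 2) ⬝ᵥ e 0‖) := by
  have hann : ∀ i j, i ≠ j → E i *ᵥ e j = 0 := fun i j hij =>
    ((hE i).dotProduct_mulVec_zero_iff _).1 <| by
      rw [← trace_mul_vecMulVec_star, ← proj3_eq_vecMulVec]; exact hunamb i j hij
  set q : Fin 3 → ℝ := fun i => (star (e i) ⬝ᵥ Einc *ᵥ e i).re
  have hq (i : Fin 3) : 0 ≤ q i := hEinc.re_dotProduct_nonneg (e i)
  have hsucc (i : Fin 3) : ((E i * proj3 (e i)).trace).re = 1 - q i := by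
    rw [proj3_eq_vecMulVec, trace_mul_vecMulVec_star,
      dotProduct_mulVec_self_eq_sub_of_unambiguous hsum hann, (hunit i).star_dotProduct_self]
    simp [q]
  have hpair (i j : Fin 3) (hij : i ≠ j) :
      √(p i * p j) * ‖star (e i) ⬝ᵥ e j‖ ≤ (p i * q i + p j * q j) / 2 := by
    refine Real.sqrt_mul_mul_le_of_sq_le_mul (hp i) (hp j) (hq i) (hq j) (norm_nonneg _) ?_
    rw [dotProduct_eq_dotProduct_mulVec_of_unambiguous hsum (fun k => (hE k).isHermitian) hann
      hij]
    exact hEinc.norm_dotProduct_mulVec_sq_le (e i) (e j)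
  have hS : 0 ≤ √(p 0 * p 1) * ‖star (e 0) ⬝ᵥ e 1‖ + √(p 1 * p 2) * ‖star (e 1) ⬝ᵥ e 2‖
      + √(p 2 * p 0) * ‖star (e 2) ⬝ᵥ e 0‖ := by positivity
  simp only [Fin.sum_univ_three, hsucc] at hpsum ⊢
  linarith [hpair 0 1 (by decide), hpair 1 2 (by decide), hpair 2 0 (by decide)]

/-- Upper bound on the success probability of unambiguous discrimination of three
pairwise linearly independent pure states. -/
theorem stmt17 (e : Fin 3 → (Fin 3 → ℂ)) (hunit : ∀ i, IsUnitVec3 (e i))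
    (hpair : ∀ i j : Fin 3, i ≠ j → LinearIndependent ℂ ![e i, e j])
    (p : Fin 3 → ℝ) (hp : ∀ i, 0 ≤ p i) (hpsum : ∑ i, p i = 1)
    (E : Fin 3 → Matrix (Fin 3) (Fin 3) ℂ) (Einc : Matrix (Fin 3) (Fin 3) ℂ)
    (hE : ∀ i, (E i).PosSemidef) (hEinc : Einc.PosSemidef)
    (hsum : (∑ i, E i) + Einc = (1 : Matrix (Fin 3) (Fin 3) ℂ))
    (hunamb : ∀ i j, i ≠ j → (E i * proj3 (e j)).trace = 0) :
    ∑ i, p i * ((E i * proj3 (e i)).trace).re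
      ≤ 1 - (2/3) * (Real.sqrt (p 0 * p 1) * ‖star (e 0) ⬝ᵥ e 1‖
          + Real.sqrt (p 1 * p 2) * ‖star (e 1) ⬝ᵥ e 2‖
          + Real.sqrt (p 2 * p 0) * ‖star (e 2) ⬝ᵥ e 0‖) :=
  stmt17_general e hunit p hp hpsum E Einc hE hEinc hsum hunamb
end
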